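/- arXiv:2311.04311 — 2 statements merged into one kernel-verified Lean document; each statement's English description precedes it below -/
import Mathlib

section
/- Let K be a real symmetric positive definite n×n matrix, f ∈ ℝⁿ, and c = K⁻¹ f. Fix j, and let K_j, f_j be obtained from K and f by deleting the j-th row and column (resp. the j-th entry). Let c' = K_j⁻¹ f_j and define the partial interpolant value P_j = Σ_{k ≠ j} c'_k K_{jk}. Then f_j − P_j = c_j / (K⁻¹)_{jj} (Rippa's formula for the leave-one-out error). -/
open Matrix Finset

lemma sum_ne_eq {n : ℕ} (j : Fin n) (g : Fin n → ℝ) (hg : g j = 0) :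
    ∑ k : Fin n, g k = ∑ a : {k : Fin n // k ≠ j}, g a := by
  rw [← Finset.sum_subtype (Finset.univ.erase j) (fun x => by simp) g]
  rw [← Finset.add_sum_erase _ g (Finset.mem_univ j), hg, zero_add]

lemma sub_posdef {n : ℕ} (K : Matrix (Fin n) (Fin n) ℝ) (hK : K.PosDef) (j : Fin n) :
    (Matrix.of fun a b : {k : Fin n // k ≠ j} => K a b).PosDef := by
  have hsemi : ((K.submatrix ((↑) : {k : Fin n // k ≠ j} → Fin n) (↑))).PosSemidef :=
    hK.posSemidef.submatrix _
  refine posDef_iff_dotProduct_mulVec.mpr ⟨hsemi.1, fun x hx => ?_⟩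
  set y : Fin n → ℝ := fun k => if h : k = j then 0 else x ⟨k, h⟩ with hy
  have hyj : y j = 0 := by simp [hy]
  have hyne : y ≠ 0 := by
    intro h
    apply hx
    ext a
    have := congrFun h a.1
    simpa [hy, a.2] using this
  have key : dotProduct (star x) ((Matrix.of fun a b : {k : Fin n // k ≠ j} => K a b) *ᵥ x)
      = dotProduct (star y) (K *ᵥ y) := by
    simp only [dotProduct, mulVec, Pi.star_apply, star_trivial, id_eq]
    rw [sum_ne_eq j (fun i => y i * ∑ k, K i k * y k) (by simp [hyj])]
    refine Finset.sum_congr rfl fun a _ => ?_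
    have hya : y a.1 = x a := by simp [hy, a.2]
    rw [hya]
    congr 1
    rw [sum_ne_eq j (fun k => K a.1 k * y k) (by simp [hyj])]
    refine Finset.sum_congr rfl fun b _ => ?_
    simp [hy, b.2]
  rw [key]
  exact hK.dotProduct_mulVec_pos hyne

/-- **Rippa's formula.** Let `K` be a real symmetric positive definite
`n × n` matrix, `f ∈ ℝⁿ`, `c = K⁻¹ f`. For fixed `j`, let `Kⱼ`, `fⱼ` delete the `j`-th
row/column (resp. entry), `c' = Kⱼ⁻¹ fⱼ`, and `Pⱼ = ∑_{k ≠ j} c'_k K_{j k}`. Then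
`f j - Pⱼ = c j / (K⁻¹) j j`. -/
theorem stmt1 {n : ℕ} (K : Matrix (Fin n) (Fin n) ℝ) (hK : K.PosDef)
    (f : Fin n → ℝ) (j : Fin n) :
    f j - (∑ k : {k : Fin n // k ≠ j},
        ((Matrix.of fun a b : {k : Fin n // k ≠ j} => K a b)⁻¹ *ᵥ
          fun a : {k : Fin n // k ≠ j} => f a) k * K j k)
      = (K⁻¹ *ᵥ f) j / K⁻¹ j j := by
  classical
  set A : Matrix {k : Fin n // k ≠ j} {k : Fin n // k ≠ j} ℝ :=
    Matrix.of fun a b : {k : Fin n // k ≠ j} => K a b with hA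
  have hApd := sub_posdef K hK j
  set c' : {k : Fin n // k ≠ j} → ℝ := A⁻¹ *ᵥ (fun a => f a) with hc'
  have hAc' : A *ᵥ c' = fun a : {k : Fin n // k ≠ j} => f a := by
    rw [hc', mulVec_mulVec, Matrix.mul_nonsing_inv _
      ((Matrix.isUnit_iff_isUnit_det A).mp hApd.isUnit), one_mulVec]
  set P : ℝ := ∑ k : {k : Fin n // k ≠ j}, c' k * K j k with hP
  set c'' : Fin n → ℝ := fun k => if h : k = j then 0 else c' ⟨k, h⟩ with hc''
  have hc''j : c'' j = 0 := by simp [hc'']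
  have hKc'' : K *ᵥ c'' = fun i => if i = j then P else f i := by
    funext i
    show ∑ k, K i k * c'' k = _
    rw [sum_ne_eq j (fun k => K i k * c'' k) (by simp [hc''j])]
    have hterm : ∀ a : {k : Fin n // k ≠ j}, K i a.1 * c'' a.1 = K i a.1 * c' a := by
      intro a; simp [hc'', a.2]
    rw [Finset.sum_congr rfl fun a _ => hterm a]
    by_cases h : i = j
    · subst h
      simp only [if_pos rfl, hP]
      exact Finset.sum_congr rfl fun a _ => mul_comm _ _
    · rw [if_neg h]
      have := congrFun hAc' ⟨i, h⟩
      exact this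
  have hinv : K⁻¹ *ᵥ (K *ᵥ c'') = c'' := by
    rw [mulVec_mulVec, Matrix.nonsing_inv_mul _
      ((Matrix.isUnit_iff_isUnit_det K).mp hK.isUnit), one_mulVec]
  have hf : f = (fun i => if i = j then P else f i) + (f j - P) • (Pi.single j 1 : Fin n → ℝ) := by
    funext i
    by_cases h : i = j
    · subst h; simp
    · simp [h, Pi.single_apply]
  have hKf : (K⁻¹ *ᵥ f) j = (f j - P) * K⁻¹ j j := by
    conv_lhs => rw [hf, mulVec_add, mulVec_smul]
    rw [← hKc'', Pi.add_apply, hinv, hc''j]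
    simp [mulVec_single]
  have hpos : 0 < K⁻¹ j j := by
    have h := hK.inv.dotProduct_mulVec_pos (x := Pi.single j 1) (by
      intro h
      have := congrFun h j
      simp at this)
    simpa [mulVec_single, dotProduct, Pi.single_apply, ite_mul] using h
  rw [hKf, mul_div_assoc, div_self hpos.ne', mul_one]
end

section
/- Leave-one-out coefficient identity: with the notation of Rippa's formula (K symmetric positive definite, c = K⁻¹f, and c' = K_j⁻¹ f_j the coefficients of the partial fit omitting index j), for every k ≠ j we have c'_k = c_k − c_j (K⁻¹)_{jk} / (K⁻¹)_{jj}. -/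
open Matrix Finset

/-- **leave-one-out coefficient identity.** With `K` symmetric positive
definite, `c = K⁻¹ f`, and `c' = Kⱼ⁻¹ fⱼ` the coefficients of the partial fit omitting
index `j`, for every `k ≠ j` one has `c'_k = c_k - c_j (K⁻¹)_{jk} / (K⁻¹)_{jj}`. -/
theorem stmt13 {n : ℕ} (K : Matrix (Fin n) (Fin n) ℝ) (hK : K.PosDef)
    (f : Fin n → ℝ) (j : Fin n) (k : {k : Fin n // k ≠ j}) :
    ((Matrix.of fun a b : {k : Fin n // k ≠ j} => K a b)⁻¹ *ᵥ
        fun a : {k : Fin n // k ≠ j} => f a) k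
      = (K⁻¹ *ᵥ f) k - (K⁻¹ *ᵥ f) j * K⁻¹ j k / K⁻¹ j j := by
  set M := K⁻¹ with hMdef
  have hM : M.PosDef := hK.inv
  have hMjj : 0 < M j j := by
    have := hM.dotProduct_mulVec_pos (x := Pi.single j 1) (by
      intro h
      simpa using congr_fun h j)
    simpa [dotProduct, mulVec, Pi.single_apply, Finset.mul_sum] using this
  have hMjj' : M j j ≠ 0 := hMjj.ne'
  have hsymm : ∀ a b, M a b = M b a := by
    intro a b
    simpa using hM.1.apply b a
  have hKM : K * M = 1 := Matrix.mul_nonsing_inv K (isUnit_iff_ne_zero.2 hK.det_pos.ne')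
  have hKMe : ∀ a b : Fin n, (∑ c, K a c * M c b) = if a = b then 1 else 0 := by
    intro a b
    have := congr_fun (congr_fun hKM a) b
    simpa [Matrix.mul_apply, Matrix.one_apply] using this
  -- sum over subtype = sum over erase j
  have hsub : ∀ g : Fin n → ℝ, (∑ c : {k : Fin n // k ≠ j}, g c) = ∑ c ∈ Finset.univ.erase j, g c := by
    intro g
    exact (Finset.sum_subtype _ (fun x => by simp [Finset.mem_erase]) g).symm
  have herase : ∀ g : Fin n → ℝ, (∑ c ∈ Finset.univ.erase j, g c) = (∑ c, g c) - g j := by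
    intro g
    exact Finset.sum_erase_eq_sub (Finset.mem_univ j)
  set A : Matrix {k : Fin n // k ≠ j} {k : Fin n // k ≠ j} ℝ :=
    Matrix.of fun a b => K a b with hA
  set B : Matrix {k : Fin n // k ≠ j} {k : Fin n // k ≠ j} ℝ :=
    Matrix.of fun a b => M a b - M a j * M j b / M j j with hB
  have hAB : A * B = 1 := by
    ext a b
    rw [Matrix.mul_apply, Matrix.one_apply]
    have : (∑ c : {k : Fin n // k ≠ j}, A a c * B c b)
        = ∑ c : {k : Fin n // k ≠ j},
            (K a c * M c b - K a c * M c j * (M j b / M j j)) := by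
      apply Finset.sum_congr rfl
      intro c _
      simp [hA, hB]
      ring
    rw [this, Finset.sum_sub_distrib]
    rw [hsub (fun c => K a c * M c b), hsub (fun c => K a c * M c j * (M j b / M j j)),
      herase, herase, ← Finset.sum_mul, hKMe, hKMe]
    have haj : (a : Fin n) ≠ j := a.2
    have hbj : (b : Fin n) ≠ j := b.2
    have hab : (a = b) ↔ ((a : Fin n) = (b : Fin n)) := Subtype.ext_iff
    by_cases h : (a : Fin n) = (b : Fin n)
    · rw [if_pos h, if_pos (hab.2 h), if_neg haj]
      field_simp
      ring
    · rw [if_neg h, if_neg (fun hh => h (hab.1 hh)), if_neg haj]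
      field_simp
      ring
  have hAinv : A⁻¹ = B := Matrix.inv_eq_right_inv hAB
  show (A⁻¹ *ᵥ fun a : {k : Fin n // k ≠ j} => f a) k = _
  rw [hAinv]
  simp only [Matrix.mulVec, dotProduct, hB, Matrix.of_apply]
  rw [hsub (fun c => (M k c - M k j * M j c / M j j) * f c), herase]
  have hjj0 : (M (k : Fin n) j - M k j * M j j / M j j) * f j = 0 := by
    field_simp
    ring
  rw [hjj0, sub_zero]
  have : ∀ c, (M (k : Fin n) c - M k j * M j c / M j j) * f c
      = M k c * f c - (M j c * f c) * (M j k / M j j) := by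
    intro c
    rw [hsymm j k]
    ring
  rw [Finset.sum_congr rfl (fun c _ => this c), Finset.sum_sub_distrib, ← Finset.sum_mul]
  ring
end
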